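/- Let γ be a piecewise-smooth bounded loop and K > 0 with |γ'(t)| ≥ K for all t at which γ' is defined. Let F₀ ⊆ [0,1) be the set of points t (taken mod 1) that are sign-change points of γ', and assume F₀ is non-periodic: there is no r ∈ (0,1) with {f + r mod 1 : f ∈ F₀} = F₀. Then for all s, t ∈ [0,1) with s ≠ t, sup{ |γ'(u + s) − γ'(u + t)| : u ∈ ℝ such that both γ'(u+s) and γ'(u+t) are defined } ≥ K. -/

import Mathlib

/-- The set `F + ℤ = {f + k : f ∈ F, k ∈ ℤ}` of integer translates of points of `F`. -/
def BreaksSet (F : Set ℝ) : Set ℝ := {x : ℝ | ∃ f ∈ F, ∃ k : ℤ, x = f + k}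

/-- `γ` is a loop (1-periodic), continuous, and infinitely differentiable off `F + ℤ`;
i.e. a piecewise-smooth loop with breaks in `F + ℤ`. -/
def HasBreaksIn (γ : ℝ → ℝ) (F : Set ℝ) : Prop :=
  (∀ t, γ (t + 1) = γ t) ∧ Continuous γ ∧ ContDiffOn ℝ (⊤ : ℕ∞) γ (BreaksSet F)ᶜ

/-- `γ` is a piecewise-smooth loop. -/
def IsPiecewiseSmooth (γ : ℝ → ℝ) : Prop :=
  ∃ F : Set ℝ, F.Finite ∧ F ⊆ Set.Ico 0 1 ∧ HasBreaksIn γ F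

/-- A piecewise-smooth loop with breaks in `F + ℤ`, all of whose derivatives are
bounded on the complement of the breaks. -/
def BoundedBreaksIn (γ : ℝ → ℝ) (F : Set ℝ) : Prop :=
  HasBreaksIn γ F ∧ ∀ k : ℕ, ∃ M : ℝ, ∀ t ∈ (BreaksSet F)ᶜ, |iteratedDeriv k γ t| ≤ M

/-- `γ` is a piecewise-smooth bounded loop. -/
def IsPiecewiseSmoothBounded (γ : ℝ → ℝ) : Prop :=
  ∃ F : Set ℝ, F.Finite ∧ F ⊆ Set.Ico 0 1 ∧ BoundedBreaksIn γ F

/-- The right limit of `f` at `t`, with the variable ranging outside the set `B`. -/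
def RightLimAt (f : ℝ → ℝ) (B : Set ℝ) (t L : ℝ) : Prop :=
  Filter.Tendsto f (nhdsWithin t (Set.Ioi t \ B)) (nhds L)

/-- The left limit of `f` at `t`, with the variable ranging outside the set `B`. -/
def LeftLimAt (f : ℝ → ℝ) (B : Set ℝ) (t L : ℝ) : Prop :=
  Filter.Tendsto f (nhdsWithin t (Set.Iio t \ B)) (nhds L)

/-- `t` is a sign-change point of `f` (relative to the break set `B`): the one-sided
limits of `f` at `t` exist and have opposite nonzero signs. -/
def SignChangeAt (f : ℝ → ℝ) (B : Set ℝ) (t : ℝ) : Prop :=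
  ∃ Lp Lm : ℝ, RightLimAt f B t Lp ∧ LeftLimAt f B t Lm ∧ Lp * Lm < 0

/-- The 1-periodic step function equal to `1` on `[0, 1/2) + ℤ` and `-1` on `[1/2, 1) + ℤ`. -/
noncomputable def stepLoop : ℝ → ℝ := fun t => if Int.fract t < 1/2 then 1 else -1

/-! If the supremum were smaller than `K`, then, since `|γ'| ≥ K`, the values `γ' v` and
`γ' (v + r)` with `r = t - s` would have the same sign wherever both are defined. As `γ''` is
bounded, `γ'` is Lipschitz between consecutive breaks, so it has one-sided limits everywhere, all
of absolute value at least `K`. Passing to the limit, the one-sided limits at `p + r` have the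
signs of those at `p`, so translation by `r` (and likewise by `-r`) maps sign-change points to
sign-change points, and `F₀` would be invariant under the rotation by `r` modulo `1`. -/

open Set Filter Topology
open scoped NNReal

theorem Function.Periodic.deriv {𝕜 E : Type*} [NontriviallyNormedField 𝕜] [NormedAddCommGroup E]
    [NormedSpace 𝕜 E] {f : 𝕜 → E} {c : 𝕜} (h : Function.Periodic f c) :
    Function.Periodic (deriv f) c := fun x => by
  rw [← deriv_comp_add_const, h.funext]

section BreaksSet

variable {F : Set ℝ}

theorem add_intCast_mem_breaksSet_iff (x : ℝ) (k : ℤ) :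
    x + k ∈ BreaksSet F ↔ x ∈ BreaksSet F := by
  constructor
  · rintro ⟨f, hf, m, hm⟩
    exact ⟨f, hf, m - k, by push_cast; linarith⟩
  · rintro ⟨f, hf, m, rfl⟩
    exact ⟨f, hf, m + k, by push_cast; ring⟩

theorem breaksSet_inter_Icc_finite (hF : F.Finite) (a b : ℝ) :
    (BreaksSet F ∩ Icc a b).Finite := by
  refine (hF.biUnion fun f _ => (Set.finite_Icc ⌈a - f⌉ ⌊b - f⌋).image fun k : ℤ => f + k).subset ?_
  rintro _ ⟨⟨f, hf, k, rfl⟩, hk⟩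
  refine mem_biUnion hf ⟨k, ⟨Int.ceil_le.2 ?_, Int.le_floor.2 ?_⟩, rfl⟩ <;> linarith [hk.1, hk.2]

theorem compl_breaksSet_mem_codiscrete (hF : F.Finite) : (BreaksSet F)ᶜ ∈ codiscrete ℝ := by
  refine mem_codiscrete.2 fun x => ?_
  rw [compl_compl, disjoint_principal_right]
  have hfin := (breaksSet_inter_Icc_finite hF (x - 1) (x + 1)).to_subtype
  filter_upwards [nhdsNE_of_nhdsNE_sdiff_finite
    (mem_nhdsWithin_of_mem_nhds (Ioo_mem_nhds (sub_one_lt x) (lt_add_one x))) hfin]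
    with y ⟨hyI, hyB⟩ hy
  exact hyB ⟨hy, Ioo_subset_Icc_self hyI⟩

end BreaksSet

section Limits

variable {f : ℝ → ℝ} {B : Set ℝ} {a L : ℝ}

theorem rightLimAt_iff_tendsto (hB : Bᶜ ∈ 𝓝[>] a) :
    RightLimAt f B a L ↔ Tendsto f (𝓝[>] a) (𝓝 L) := by
  rw [RightLimAt, sdiff_eq, nhdsWithin_inter_of_mem' hB]

theorem leftLimAt_iff_tendsto (hB : Bᶜ ∈ 𝓝[<] a) :
    LeftLimAt f B a L ↔ Tendsto f (𝓝[<] a) (𝓝 L) := by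
  rw [LeftLimAt, sdiff_eq, nhdsWithin_inter_of_mem' hB]

theorem LipschitzOnWith.exists_tendsto {α : Type*} [PseudoMetricSpace α] {g : α → ℝ} {s : Set α}
    {M : ℝ≥0} {l : Filter α} {x : α} (hg : LipschitzOnWith M g s) (hs : s ∈ l) (hl : l ≤ 𝓝 x) :
    ∃ L, Tendsto g l (𝓝 L) := by
  obtain ⟨G, hG, hgG⟩ := hg.extend_real
  exact ⟨G x, ((hG.continuous.tendsto x).mono_left hl).congr' (eventuallyEq_of_mem hs hgG.symm)⟩

end Limits

section SignChange

variable {f : ℝ → ℝ} {B : Set ℝ} {K : ℝ} {M : ℝ≥0}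

theorem exists_tendsto_nhdsGT_of_nnnorm_deriv_le (hfd : ∀ x ∉ B, DifferentiableAt ℝ f x)
    (hf' : ∀ x ∉ B, ‖deriv f x‖₊ ≤ M) {a : ℝ} (hB : Bᶜ ∈ 𝓝[>] a) :
    ∃ L, Tendsto f (𝓝[>] a) (𝓝 L) := by
  obtain ⟨u, hau, hsub⟩ := mem_nhdsGT_iff_exists_Ioo_subset.1 hB
  exact ((convex_Ioo a u).lipschitzOnWith_of_nnnorm_deriv_le (fun x hx => hfd x (hsub hx))
    (fun x hx => hf' x (hsub hx))).exists_tendsto (Ioo_mem_nhdsGT hau) nhdsWithin_le_nhds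

theorem exists_tendsto_nhdsLT_of_nnnorm_deriv_le (hfd : ∀ x ∉ B, DifferentiableAt ℝ f x)
    (hf' : ∀ x ∉ B, ‖deriv f x‖₊ ≤ M) {a : ℝ} (hB : Bᶜ ∈ 𝓝[<] a) :
    ∃ L, Tendsto f (𝓝[<] a) (𝓝 L) := by
  obtain ⟨u, hua, hsub⟩ := mem_nhdsLT_iff_exists_Ioo_subset.1 hB
  exact ((convex_Ioo u a).lipschitzOnWith_of_nnnorm_deriv_le (fun x hx => hfd x (hsub hx))
    (fun x hx => hf' x (hsub hx))).exists_tendsto (Ioo_mem_nhdsLT hua) nhdsWithin_le_nhds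

def SignPreservingShift (f : ℝ → ℝ) (B : Set ℝ) (r : ℝ) : Prop :=
  ∀ v, v ∉ B → v + r ∉ B → 0 < f v * f (v + r)

theorem signPreservingShift_of_abs_sub_le {c r : ℝ} (hc : c < K) (hfK : ∀ x ∉ B, K ≤ |f x|)
    (h : ∀ v, v ∉ B → v + r ∉ B → |f v - f (v + r)| ≤ c) : SignPreservingShift f B r := by
  intro v hv hvr
  have h₁ := hfK v hv
  have h₂ := hfK (v + r) hvr
  have h₃ := h v hv hvr
  have hc₀ : 0 ≤ c := (abs_nonneg _).trans h₃
  have hK₀ : 0 < K := hc₀.trans_lt hc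
  have e₁ : K ^ 2 ≤ f v ^ 2 := by rw [← sq_abs (f v)]; exact pow_le_pow_left₀ hK₀.le h₁ 2
  have e₂ : K ^ 2 ≤ f (v + r) ^ 2 := by
    rw [← sq_abs (f (v + r))]; exact pow_le_pow_left₀ hK₀.le h₂ 2
  have e₃ : (f v - f (v + r)) ^ 2 ≤ c ^ 2 := by
    rw [← sq_abs]; exact pow_le_pow_left₀ (abs_nonneg _) h₃ 2
  nlinarith [pow_lt_pow_left₀ hc hc₀ two_ne_zero]

theorem SignPreservingShift.neg {r : ℝ} (hr : SignPreservingShift f B r) :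
    SignPreservingShift f B (-r) := by
  intro v hv hvr
  have h := hr (v + -r) hvr (by simpa using hv)
  rwa [neg_add_cancel_right, mul_comm] at h

theorem SignPreservingShift.add_intCast {r : ℝ} (hr : SignPreservingShift f B r)
    (hf : Function.Periodic f 1) (hB : ∀ (x : ℝ) (k : ℤ), x + k ∈ B ↔ x ∈ B) (k : ℤ) :
    SignPreservingShift f B (r + k) := by
  intro v hv hvr
  rw [← add_assoc, hB] at hvr
  have hper : f (v + r + k) = f (v + r) := by simpa using (hf.int_mul k) (v + r)
  rw [← add_assoc, hper]
  exact hr v hv hvr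

theorem mul_pos_of_tendsto_of_signPreservingShift {r : ℝ} (hK : 0 < K)
    (hfK : ∀ x ∉ B, K ≤ |f x|) (hr : SignPreservingShift f B r) {l l' : Filter ℝ} [l.NeBot]
    (hl : ∀ᶠ x in l, x ∉ B) (hl' : ∀ᶠ x in l', x ∉ B) (hshift : Tendsto (· + r) l l')
    {L L' : ℝ} (hL : Tendsto f l (𝓝 L)) (hL' : Tendsto f l' (𝓝 L')) : 0 < L * L' := by
  have hL'r : Tendsto (fun x => f (x + r)) l (𝓝 L') := hL'.comp hshift
  have hlr : ∀ᶠ x in l, x + r ∉ B := hshift.eventually hl'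
  have hKL : K ≤ |L| := ge_of_tendsto hL.abs (hl.mono hfK)
  have hKL' : K ≤ |L'| := ge_of_tendsto hL'r.abs (hlr.mono fun x hx => hfK _ hx)
  have h₀ : 0 ≤ L * L' :=
    ge_of_tendsto (hL.mul hL'r) ((hl.and hlr).mono fun x hx => (hr x hx.1 hx.2).le)
  refine h₀.lt_of_ne (mul_ne_zero ?_ ?_).symm <;> rw [← abs_pos] <;> linarith

theorem SignChangeAt.add_of_signPreservingShift (hB : Bᶜ ∈ codiscrete ℝ)
    (hfd : ∀ x ∉ B, DifferentiableAt ℝ f x) (hf' : ∀ x ∉ B, ‖deriv f x‖₊ ≤ M) (hK : 0 < K)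
    (hfK : ∀ x ∉ B, K ≤ |f x|) {r p : ℝ} (hr : SignPreservingShift f B r)
    (hp : SignChangeAt f B p) : SignChangeAt f B (p + r) := by
  have hne : ∀ x, Bᶜ ∈ 𝓝[≠] x := by
    simpa only [mem_codiscrete, compl_compl, disjoint_principal_right] using hB
  have hgt : ∀ x, Bᶜ ∈ 𝓝[>] x := fun x => nhdsWithin_mono x (fun y hy => ne_of_gt hy) (hne x)
  have hlt : ∀ x, Bᶜ ∈ 𝓝[<] x := fun x => nhdsWithin_mono x (fun y hy => ne_of_lt hy) (hne x)
  obtain ⟨Lp, Lm, hLp, hLm, hpm⟩ := hp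
  rw [rightLimAt_iff_tendsto (hgt p)] at hLp
  rw [leftLimAt_iff_tendsto (hlt p)] at hLm
  obtain ⟨Lp', hLp'⟩ := exists_tendsto_nhdsGT_of_nnnorm_deriv_le hfd hf' (hgt (p + r))
  obtain ⟨Lm', hLm'⟩ := exists_tendsto_nhdsLT_of_nnnorm_deriv_le hfd hf' (hlt (p + r))
  have hright : 0 < Lp * Lp' := mul_pos_of_tendsto_of_signPreservingShift hK hfK hr (hgt p)
    (hgt (p + r)) ((continuous_add_const r).continuousWithinAt.tendsto_nhdsWithin
      fun x hx => add_lt_add_left hx r) hLp hLp'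
  have hleft : 0 < Lm * Lm' := mul_pos_of_tendsto_of_signPreservingShift hK hfK hr (hlt p)
    (hlt (p + r)) ((continuous_add_const r).continuousWithinAt.tendsto_nhdsWithin
      fun x hx => add_lt_add_left hx r) hLm hLm'
  refine ⟨Lp', Lm', (rightLimAt_iff_tendsto (hgt _)).2 hLp',
    (leftLimAt_iff_tendsto (hlt _)).2 hLm', ?_⟩
  nlinarith [mul_pos hright hleft]

theorem SignChangeAt.fract_add_of_signPreservingShift (hB : Bᶜ ∈ codiscrete ℝ)
    (hBper : ∀ (x : ℝ) (k : ℤ), x + k ∈ B ↔ x ∈ B) (hf : Function.Periodic f 1)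
    (hfd : ∀ x ∉ B, DifferentiableAt ℝ f x) (hf' : ∀ x ∉ B, ‖deriv f x‖₊ ≤ M) (hK : 0 < K)
    (hfK : ∀ x ∉ B, K ≤ |f x|) {r p : ℝ} (hr : SignPreservingShift f B r)
    (hp : SignChangeAt f B p) : SignChangeAt f B (Int.fract (p + r)) := by
  have h := hp.add_of_signPreservingShift hB hfd hf' hK hfK (hr.add_intCast hf hBper (-⌊p + r⌋))
  convert h using 1
  rw [← Int.self_sub_floor]
  push_cast
  ring

theorem image_fract_add_signChangeAt (hB : Bᶜ ∈ codiscrete ℝ)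
    (hBper : ∀ (x : ℝ) (k : ℤ), x + k ∈ B ↔ x ∈ B) (hf : Function.Periodic f 1)
    (hfd : ∀ x ∉ B, DifferentiableAt ℝ f x) (hf' : ∀ x ∉ B, ‖deriv f x‖₊ ≤ M) (hK : 0 < K)
    (hfK : ∀ x ∉ B, K ≤ |f x|) {r : ℝ} (hr : SignPreservingShift f B r) :
    (fun x => Int.fract (x + r)) '' {t ∈ Ico (0 : ℝ) 1 | SignChangeAt f B t} =
      {t ∈ Ico (0 : ℝ) 1 | SignChangeAt f B t} := by
  refine Subset.antisymm ?_ fun p ⟨hp01, hp⟩ => ⟨Int.fract (p + -r), ?_, ?_⟩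
  · rintro _ ⟨p, ⟨-, hp⟩, rfl⟩
    exact ⟨⟨Int.fract_nonneg _, Int.fract_lt_one _⟩,
      hp.fract_add_of_signPreservingShift hB hBper hf hfd hf' hK hfK hr⟩
  · exact ⟨⟨Int.fract_nonneg _, Int.fract_lt_one _⟩,
      hp.fract_add_of_signPreservingShift hB hBper hf hfd hf' hK hfK hr.neg⟩
  · have h : Int.fract (p + -r) + r = p - ⌊p + -r⌋ := by rw [← Int.self_sub_floor]; ring
    dsimp only
    rw [h, Int.fract_sub_intCast, Int.fract_eq_self.2 hp01]

end SignChange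

section Loops

variable {γ : ℝ → ℝ} {F : Set ℝ}

theorem HasBreaksIn.differentiableAt_deriv (hF : F.Finite) (hγ : HasBreaksIn γ F) {x : ℝ}
    (hx : x ∉ BreaksSet F) : DifferentiableAt ℝ (deriv γ) x := by
  have hopen : IsOpen (BreaksSet F)ᶜ := (mem_codiscrete'.1 (compl_breaksSet_mem_codiscrete hF)).1
  exact ((hγ.2.2.deriv_of_isOpen hopen (by decide)).differentiableOn one_ne_zero).differentiableAt
    (hopen.mem_nhds hx)

theorem BoundedBreaksIn.exists_nnnorm_deriv_deriv_le (hγ : BoundedBreaksIn γ F) :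
    ∃ M : ℝ≥0, ∀ x ∉ BreaksSet F, ‖deriv (deriv γ) x‖₊ ≤ M := by
  obtain ⟨M, hM⟩ := hγ.2 2
  refine ⟨M.toNNReal, fun x hx => ?_⟩
  rw [← NNReal.coe_le_coe, coe_nnnorm, Real.norm_eq_abs, Real.coe_toNNReal']
  have h := hM x hx
  rw [iteratedDeriv_succ, iteratedDeriv_one] at h
  exact h.trans (le_max_left _ _)

end Loops

theorem stmt15_general (γ : ℝ → ℝ) (F : Set ℝ) (hFfin : F.Finite)
    (hγ : BoundedBreaksIn γ F) (K : ℝ) (hK : 0 < K)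
    (hbdd : ∀ t ∈ (BreaksSet F)ᶜ, K ≤ |deriv γ t|)
    (F₀ : Set ℝ)
    (hF₀ : F₀ = {t ∈ Set.Ico (0:ℝ) 1 | SignChangeAt (deriv γ) (BreaksSet F) t})
    (hnonper : ¬ ∃ r : ℝ, r ∈ Set.Ioo (0:ℝ) 1 ∧
      (fun f => Int.fract (f + r)) '' F₀ = F₀) :
    ∀ s ∈ Set.Ico (0:ℝ) 1, ∀ t ∈ Set.Ico (0:ℝ) 1, s ≠ t →
      ∀ c : ℝ, c < K →
        ∃ u : ℝ, u + s ∉ BreaksSet F ∧ u + t ∉ BreaksSet F ∧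
          c < |deriv γ (u + s) - deriv γ (u + t)| := by
  intro s hs t ht hst c hc
  by_contra! hclose
  have hshift : SignPreservingShift (deriv γ) (BreaksSet F) (t - s) :=
    signPreservingShift_of_abs_sub_le hc hbdd fun v hv hvr => by
      have e : v - s + t = v + (t - s) := by ring
      simpa [e] using hclose (v - s) (by simpa using hv) (by rwa [e])
  obtain ⟨r, hr01, hr⟩ : ∃ r ∈ Ioo (0 : ℝ) 1, SignPreservingShift (deriv γ) (BreaksSet F) r := by
    rcases hst.lt_or_gt with h | h
    · exact ⟨t - s, ⟨by linarith, by linarith [ht.2, hs.1]⟩, hshift⟩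
    · exact ⟨s - t, ⟨by linarith, by linarith [hs.2, ht.1]⟩, by simpa using hshift.neg⟩
  obtain ⟨M, hM⟩ := hγ.exists_nnnorm_deriv_deriv_le
  exact hnonper ⟨r, hr01, hF₀ ▸ image_fract_add_signChangeAt
    (compl_breaksSet_mem_codiscrete hFfin) add_intCast_mem_breaksSet_iff
    (Function.Periodic.deriv hγ.1.1)
    (fun x hx => hγ.1.differentiableAt_deriv hFfin hx) hM hK hbdd hr⟩

/-- Let `γ` be a piecewise-smooth bounded loop with `|γ'| ≥ K > 0` off the
breaks, and let `F₀ ⊆ [0,1)` be its set of sign-change points mod 1.  If `F₀` is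
non-periodic, then for distinct `s, t ∈ [0,1)` the sup of `|γ'(u+s) − γ'(u+t)|` over the
`u` where both are defined is at least `K` (expressed as: every `c < K` is exceeded). -/
theorem stmt15 (γ : ℝ → ℝ) (F : Set ℝ) (hFfin : F.Finite) (hFsub : F ⊆ Set.Ico 0 1)
    (hγ : BoundedBreaksIn γ F) (K : ℝ) (hK : 0 < K)
    (hbdd : ∀ t ∈ (BreaksSet F)ᶜ, K ≤ |deriv γ t|)
    (F₀ : Set ℝ)
    (hF₀ : F₀ = {t ∈ Set.Ico (0:ℝ) 1 | SignChangeAt (deriv γ) (BreaksSet F) t})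
    (hnonper : ¬ ∃ r : ℝ, r ∈ Set.Ioo (0:ℝ) 1 ∧
      (fun f => Int.fract (f + r)) '' F₀ = F₀) :
    ∀ s ∈ Set.Ico (0:ℝ) 1, ∀ t ∈ Set.Ico (0:ℝ) 1, s ≠ t →
      ∀ c : ℝ, c < K →
        ∃ u : ℝ, u + s ∉ BreaksSet F ∧ u + t ∉ BreaksSet F ∧
          c < |deriv γ (u + s) - deriv γ (u + t)| :=
  stmt15_general γ F hFfin hγ K hK hbdd F₀ hF₀ hnonper
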